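/- arXiv:2409.00534 — 4 statements merged into one kernel-verified Lean document; each statement's English description precedes it below -/
import Mathlib

section
/- Every r-graph is matching covered: it is connected, has order at least two, and every edge lies in some perfect matching. -/
/-- The underlying simple graph of a multigraph given by `ends`. -/
def toSimple {V E : Type} (ends : E → Sym2 V) : SimpleGraph V where
  Adj u w := u ≠ w ∧ ∃ e, ends e = s(u, w)
  symm := by
    constructor
    rintro u w ⟨hne, e, he⟩
    exact ⟨hne.symm, e, by rw [he]; exact Sym2.eq_swap⟩
  loopless := by constructor; rintro u ⟨hne, -⟩; exact hne rfl

/-- The edge cut `∂(X)`. -/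
def Cut {V E : Type} (ends : E → Sym2 V) (X : Set V) : Set E :=
  {e | ∃ u ∈ X, ∃ w, w ∉ X ∧ ends e = s(u, w)}

/-- Degree of a vertex (counting multiplicities). -/
noncomputable def deg {V E : Type} (ends : E → Sym2 V) (v : V) : ℕ :=
  {e | v ∈ ends e}.ncard

/-- A perfect matching: every vertex is incident with exactly one edge of `M`. -/
def IsPM {V E : Type} (ends : E → Sym2 V) (M : Set E) : Prop :=
  ∀ v : V, ∃! e, e ∈ M ∧ v ∈ ends e

/-- An `r`-graph: a loopless connected `r`-regular multigraph in which every odd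
cut has at least `r` edges. -/
def IsRGraph {V E : Type} (r : ℕ) (ends : E → Sym2 V) : Prop :=
  (∀ e, ¬ (ends e).IsDiag) ∧ (toSimple ends).Connected ∧
    (∀ v, deg ends v = r) ∧ ∀ X : Set V, Odd X.ncard → r ≤ (Cut ends X).ncard

/-! Let `e₀ = uv`. By Tutte's theorem it suffices that `G - u - v` has no Tutte violator `S`.
Since the cut of `V` is empty, `|V|` is even, so by parity a violator would leave at least
`|S| + 2` odd components. Each of them is left by at least `r` edges, all ending in
`T = S ∪ {u, v}` and no two components sharing one, whereas at most `r |T| - 2` edges leave `T`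
because `e₀` lies inside `T`. Hence `r (|S| + 2) ≤ r (|S| + 2) - 2`, which is absurd. -/

open SimpleGraph

variable {V E : Type} {ends : E → Sym2 V} {r : ℕ}

lemma cut_univ : Cut ends Set.univ = ∅ :=
  Set.eq_empty_of_forall_notMem fun _ ⟨_, _, _, hw, _⟩ => hw trivial

lemma even_card_of_odd_cut (hr : 0 < r)
    (hcut : ∀ X : Set V, Odd X.ncard → r ≤ (Cut ends X).ncard) : Even (Nat.card V) := by
  by_contra hodd
  have := hcut Set.univ (by rwa [Set.ncard_univ, ← Nat.not_even_iff_odd])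
  simp [cut_univ] at this
  omega

lemma ncard_cut_add_two_le [Fintype V] [Fintype E] (hdeg : ∀ v, deg ends v = r) {T : Set V}
    {e₀ : E} (he₀ : ¬ (ends e₀).IsDiag) (hT : ∀ w ∈ ends e₀, w ∈ T) :
    (Cut ends T).ncard + 2 ≤ r * T.ncard := by
  classical
  set I : V → Finset E := fun w => {e | w ∈ ends e}
  have hI : ∀ w, (I w).card = r := fun w => by
    rw [← hdeg w, deg, ← Set.ncard_coe_finset]; simp [I]
  have hsplit : ∀ w, ((I w).erase e₀).card + (if w ∈ ends e₀ then 1 else 0) = r := by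
    intro w
    split_ifs with hw
    · rw [Finset.card_erase_add_one (by simpa [I] using hw), hI]
    · rw [Finset.erase_eq_of_notMem (by simpa [I] using hw), hI, add_zero]
  have hcut : Cut ends T ⊆ ↑(T.toFinset.biUnion fun w => (I w).erase e₀) := by
    rintro e ⟨x, hx, y, hy, he⟩
    have hne : e ≠ e₀ := by
      rintro rfl
      exact hy (hT y (he ▸ Sym2.mem_mk_right x y))
    simp only [Finset.coe_biUnion, Finset.mem_coe, Set.mem_toFinset, Finset.mem_erase,
      Set.mem_iUnion]
    exact ⟨x, hx, hne, by simp [I, he]⟩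
  have htwo : 2 ≤ (T.toFinset.filter (· ∈ ends e₀)).card := by
    rw [← Sym2.card_toFinset_of_not_isDiag _ he₀]
    exact Finset.card_le_card fun w hw => by
      simp only [Sym2.mem_toFinset] at hw
      simp [hw, hT w hw]
  calc (Cut ends T).ncard + 2
      ≤ ∑ w ∈ T.toFinset, ((I w).erase e₀).card +
          ∑ w ∈ T.toFinset, (if w ∈ ends e₀ then 1 else 0) := by
        rw [Finset.sum_boole]
        gcongr
        · calc (Cut ends T).ncard ≤ (T.toFinset.biUnion fun w => (I w).erase e₀).card := by
                rw [← Set.ncard_coe_finset]; exact Set.ncard_le_ncard hcut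
            _ ≤ _ := Finset.card_biUnion_le
        · exact_mod_cast htwo
    _ = r * T.ncard := by
        rw [← Finset.sum_add_distrib, Finset.sum_congr rfl fun w _ => hsplit w, Finset.sum_const,
          smul_eq_mul, mul_comm, Set.ncard_eq_toFinset_card']

lemma mul_ncard_le_ncard_cut [Finite E] (hcut : ∀ X : Set V, Odd X.ncard → r ≤ (Cut ends X).ncard)
    {ι : Type*} (s : Finset ι) (X : ι → Set V) (T : Set V)
    (hodd : ∀ i ∈ s, Odd (X i).ncard) (hdisj : (s : Set ι).PairwiseDisjoint X)
    (hXT : ∀ i ∈ s, Disjoint (X i) T)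
    (hleave : ∀ i ∈ s, ∀ e x y, ends e = s(x, y) → x ∈ X i → y ∉ X i → y ∈ T) :
    r * s.card ≤ (Cut ends T).ncard := by
  have hsub : ∀ i ∈ s, ∀ e ∈ Cut ends (X i), ∃ x ∈ X i, ∃ y ∈ T, ends e = s(x, y) := by
    rintro i hi e ⟨x, hx, y, hy, he⟩
    exact ⟨x, hx, y, hleave i hi e x y he hx hy, he⟩
  have hcutdisj : (s : Set ι).PairwiseDisjoint fun i => Cut ends (X i) := by
    intro i hi j hj hij
    refine Set.disjoint_left.mpr fun e hei hej => ?_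
    obtain ⟨x, hx, y, hy, he⟩ := hsub i hi e hei
    obtain ⟨x', hx', y', hy', he'⟩ := hsub j hj e hej
    rcases Sym2.eq_iff.mp (he.symm.trans he') with ⟨rfl, -⟩ | ⟨-, rfl⟩
    · exact Set.disjoint_left.mp (hdisj hi hj hij) hx hx'
    · exact Set.disjoint_left.mp (hXT j hj) hx' hy
  calc r * s.card = ∑ i ∈ s, r := by rw [Finset.sum_const, smul_eq_mul, mul_comm]
    _ ≤ ∑ i ∈ s, (Cut ends (X i)).ncard := Finset.sum_le_sum fun i hi => hcut _ (hodd i hi)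
    _ = (⋃ i ∈ s, Cut ends (X i)).ncard := by
        rw [← finsum_mem_coe_finset,
          ← s.finite_toSet.ncard_biUnion (fun _ _ => Set.toFinite _) hcutdisj]
        simp only [Finset.mem_coe]
    _ ≤ (Cut ends T).ncard := by
        refine Set.ncard_le_ncard (Set.iUnion₂_subset fun i hi e he => ?_)
        obtain ⟨x, hx, y, hy, he⟩ := hsub i hi e he
        exact ⟨y, hy, x, Set.disjoint_left.mp (hXT i hi) hx, by rw [he, Sym2.eq_swap]⟩

lemma exists_isPerfectMatching_of_induce_compl_pair {G : SimpleGraph V} {u v : V} (h : G.Adj u v)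
    {M : (G.induce {u, v}ᶜ).Subgraph} (hM : M.IsPerfectMatching) :
    ∃ M' : G.Subgraph, M'.IsPerfectMatching ∧ s(u, v) ∈ M'.edgeSet := by
  set e : G.induce {u, v}ᶜ ↪g G := Embedding.induce _
  set f := e.toHom
  have hmap : (M.map f).IsMatching := hM.1.map f e.injective
  have hverts : (M.map f).verts = {u, v}ᶜ := by
    rw [Subgraph.map_verts, hM.2.verts_eq_univ, Set.image_univ]
    exact Subtype.range_coe
  refine ⟨M.map f ⊔ G.subgraphOfAdj h, ⟨hmap.sup (.subgraphOfAdj h) ?_, fun w => ?_⟩, ?_⟩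
  · rw [hmap.support_eq_verts, (Subgraph.IsMatching.subgraphOfAdj h).support_eq_verts, hverts,
      subgraphOfAdj_verts]
    exact disjoint_compl_left
  · rw [Subgraph.verts_sup, hverts, subgraphOfAdj_verts, Set.compl_union_self]
    trivial
  · simp [Subgraph.edgeSet_sup]

lemma exists_isPM_of_isPerfectMatching {M : (toSimple ends).Subgraph}
    (hM : M.IsPerfectMatching) {e₀ : E} (he₀ : ends e₀ ∈ M.edgeSet) :
    ∃ N, IsPM ends N ∧ e₀ ∈ N := by
  classical
  have : Nonempty E := ⟨e₀⟩
  -- one edge over each pair of adjacent vertices, namely `e₀` over its own pair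
  set φ : Sym2 V → E := Function.update (Function.invFun ends) (ends e₀) e₀
  have hφ : ∀ p ∈ M.edgeSet, ends (φ p) = p := by
    intro p hp
    by_cases h : p = ends e₀
    · simp [φ, h]
    · simp only [φ, Function.update_of_ne h]
      refine Function.invFun_eq ?_
      induction p using Sym2.inductionOn with
      | hf a b => exact (M.adj_sub hp).2
  refine ⟨φ '' M.edgeSet, fun w => ?_, ⟨_, he₀, by simp [φ]⟩⟩
  obtain ⟨w', hw', huniq⟩ := Subgraph.isPerfectMatching_iff.mp hM w
  refine ⟨φ s(w, w'), ⟨⟨_, hw', rfl⟩, by rw [hφ _ hw']; exact Sym2.mem_mk_left _ _⟩, ?_⟩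
  rintro _ ⟨⟨p, hp, rfl⟩, hwp⟩
  rw [hφ p hp] at hwp
  obtain ⟨z, rfl⟩ := Sym2.mem_iff_exists.mp hwp
  rw [huniq z hp]

lemma even_ncard_oddComponents_deleteVerts_add {W : Type*} [Finite W] (G : SimpleGraph W)
    (S : Set W) (hW : Even (Nat.card W)) :
    Even (((⊤ : G.Subgraph).deleteVerts S).coe.oddComponents.ncard + S.ncard) := by
  have hcard : Nat.card ((⊤ : G.Subgraph).deleteVerts S).verts + S.ncard = Nat.card W := by
    rw [Nat.card_coe_set_eq, ← Set.ncard_univ]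
    exact Set.ncard_sdiff_add_ncard_of_subset (Set.subset_univ S)
  have hodd := odd_ncard_oddComponents ((⊤ : G.Subgraph).deleteVerts S).coe
  rw [Nat.odd_iff, Nat.odd_iff] at hodd
  rw [Nat.even_iff] at hW ⊢
  omega

lemma mul_ncard_oddComponents_le_ncard_cut [Finite E] {β : Type*} [Finite β]
    (hcut : ∀ X : Set V, Odd X.ncard → r ≤ (Cut ends X).ncard)
    {K : SimpleGraph β} {φ : β → V} (hφ : Function.Injective φ)
    (hadj : ∀ a b, (toSimple ends).Adj (φ a) (φ b) → K.Adj a b) {T : Set V}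
    (hT : Set.range φ = Tᶜ) :
    r * K.oddComponents.ncard ≤ (Cut ends T).ncard := by
  rw [Set.ncard_eq_toFinset_card _ K.oddComponents.toFinite]
  refine mul_ncard_le_ncard_cut hcut _ (fun c => φ '' c.supp) T (fun c hc => ?_)
    (fun c _ d _ hcd => ?_) (fun c _ => ?_) (fun c _ e x y he hx hy => ?_)
  · rw [Set.ncard_image_of_injective _ hφ]
    simpa using hc
  · exact (Set.disjoint_image_iff hφ).mpr (pairwise_disjoint_supp_connectedComponent _ hcd)
  · exact Set.disjoint_left.mpr fun _ ⟨a, _, ha⟩ => ha ▸ hT.subset ⟨a, rfl⟩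
  · by_contra hyT
    obtain ⟨b, rfl⟩ := hT.symm.subset hyT
    obtain ⟨a, ha, rfl⟩ := hx
    exact hy ⟨b, c.mem_supp_of_adj_mem_supp ha (hadj a b ⟨fun h => hy ⟨a, ha, h⟩, e, he⟩), rfl⟩

theorem exists_isPerfectMatching_induce_compl [Fintype V] [Fintype E]
    (hdeg : ∀ v, deg ends v = r) (hcut : ∀ X : Set V, Odd X.ncard → r ≤ (Cut ends X).ncard)
    (heven : Even (Nat.card V)) {e₀ : E} {u v : V} (huv : ends e₀ = s(u, v)) (hne : u ≠ v) :
    ∃ M : ((toSimple ends).induce {u, v}ᶜ).Subgraph, M.IsPerfectMatching := by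
  refine tutte.mpr fun S hS => ?_
  set H := (⊤ : ((toSimple ends).induce {u, v}ᶜ).Subgraph).deleteVerts S
  have hviol : S.ncard < H.coe.oddComponents.ncard := hS
  set φ : H.verts → V := fun a => a.1.1
  set T : Set V := Subtype.val '' S ∪ {u, v}
  have hT : Set.range φ = Tᶜ := by
    ext y
    constructor
    · rintro ⟨a, rfl⟩ (⟨b, hb, hba⟩ | hauv)
      · exact a.2.2 (Subtype.ext hba ▸ hb)
      · exact a.1.2 hauv
    · intro hy
      simp only [T, Set.mem_compl_iff, Set.mem_union, not_or] at hy
      exact ⟨⟨⟨y, hy.2⟩, trivial, fun hyS => hy.1 ⟨_, hyS, rfl⟩⟩, rfl⟩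
  have hcount : r * H.coe.oddComponents.ncard ≤ (Cut ends T).ncard :=
    mul_ncard_oddComponents_le_ncard_cut hcut (Subtype.val_injective.comp Subtype.val_injective)
      (fun a b hab => by simpa [H, a.2.2, b.2.2] using hab) hT
  have hbound : (Cut ends T).ncard + 2 ≤ r * T.ncard := by
    refine ncard_cut_add_two_le hdeg (by rwa [huv, Sym2.mk_isDiag_iff]) fun w hw => ?_
    rw [huv, Sym2.mem_iff] at hw
    exact Or.inr hw
  have hTcard : T.ncard = S.ncard + 2 := by
    rw [Set.ncard_union_eq, Set.ncard_image_of_injective _ Subtype.val_injective,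
      Set.ncard_pair hne]
    exact Set.disjoint_left.mpr fun _ ⟨a, _, ha⟩ => ha ▸ a.2
  have hpar : Even (H.coe.oddComponents.ncard + S.ncard) := by
    refine even_ncard_oddComponents_deleteVerts_add _ S ?_
    have hcompl := Set.ncard_add_ncard_compl ({u, v} : Set V)
    rw [Set.ncard_pair hne] at hcompl
    rw [Nat.card_coe_set_eq, Nat.even_iff]
    rw [Nat.even_iff] at heven
    omega
  have hgap : S.ncard + 2 ≤ H.coe.oddComponents.ncard := by
    obtain ⟨k, hk⟩ := hpar
    omega
  have := Nat.mul_le_mul_left r hgap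
  rw [hTcard] at hbound
  omega

/-- Every `r`-graph (`r ≥ 3`) is matching covered: it is connected, has order at
least two, and every edge lies in some perfect matching. -/
theorem stmt3 {V E : Type} [Fintype V] [Fintype E]
    (ends : E → Sym2 V) (r : ℕ) (hr : 3 ≤ r) (hG : IsRGraph r ends) :
    (toSimple ends).Connected ∧ 2 ≤ Fintype.card V ∧
      ∀ e, ∃ M, IsPM ends M ∧ e ∈ M := by
  obtain ⟨hloop, hconn, hdeg, hcut⟩ := hG
  have heven : Even (Nat.card V) := even_card_of_odd_cut (by omega) hcut
  refine ⟨hconn, ?_, fun e₀ => ?_⟩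
  · have := hconn.nonempty
    have := Fintype.card_pos (α := V)
    rw [Nat.card_eq_fintype_card] at heven
    obtain ⟨k, hk⟩ := heven
    omega
  · obtain ⟨u, v, huv⟩ : ∃ u v, ends e₀ = s(u, v) := Sym2.ind (fun u v => ⟨u, v, rfl⟩) (ends e₀)
    have hne : u ≠ v := by simpa [huv] using hloop e₀
    obtain ⟨M, hM⟩ := exists_isPerfectMatching_induce_compl hdeg hcut heven huv hne
    have hadj : (toSimple ends).Adj u v := ⟨hne, e₀, huv⟩
    obtain ⟨M', hM', huvM⟩ := exists_isPerfectMatching_of_induce_compl_pair hadj hM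
    exact exists_isPM_of_isPerfectMatching hM' (huv ▸ huvM)
end

section
/- In a graph G with a solitary edge e, if M_e is the unique perfect matching containing e, then every M_e-alternating cycle contains e; consequently, if M is a perfect matching disjoint from M_e, then M ∪ M_e forms a Hamiltonian cycle of G. -/
/-- Vertices connected by a walk using only edges from `C`. -/
def EdgeConn {V E : Type} (ends : E → Sym2 V) (C : Set E) : V → V → Prop :=
  Relation.ReflTransGen (fun u w => ∃ e ∈ C, ends e = s(u, w))

/-- Number of edges of `C` incident with `v`. -/
noncomputable def cdeg {V E : Type} (ends : E → Sym2 V) (C : Set E) (v : V) : ℕ :=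
  {e | e ∈ C ∧ v ∈ ends e}.ncard

/-- `C` is the edge set of a single cycle: it is nonempty, every vertex is
incident with exactly `0` or `2` edges of `C`, and any two vertices of the
cycle are joined by a walk in `C`. -/
def IsCycle {V E : Type} (ends : E → Sym2 V) (C : Set E) : Prop :=
  C.Nonempty ∧ (∀ v, cdeg ends C v = 0 ∨ cdeg ends C v = 2) ∧
    ∀ u w, cdeg ends C u = 2 → cdeg ends C w = 2 → EdgeConn ends C u w

/-- A cycle `C` is `M`-alternating (for a perfect matching `M`): on traversal
its edges alternate between `M` and its complement; equivalently, each vertex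
of the cycle is incident with exactly one edge of `C ∩ M`. -/
def IsAlternating {V E : Type} (ends : E → Sym2 V) (M C : Set E) : Prop :=
  ∀ v, cdeg ends C v = 2 → cdeg ends (C ∩ M) v = 1

/-- A Hamiltonian cycle: a cycle through every vertex. -/
def IsHamCycle {V E : Type} (ends : E → Sym2 V) (C : Set E) : Prop :=
  IsCycle ends C ∧ ∀ v : V, cdeg ends C v = 2

/-!
If an `M_e`-alternating cycle `C` avoided `e`, then `M_e ∆ C` would be a second perfect matching
containing `e`. For the second part, every vertex of `M ∪ M_e` has degree two, so the component
of any vertex is an `M_e`-alternating cycle; by the first part it passes through `e`. Hence all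
vertices lie in the component of `e`, which is therefore a Hamiltonian cycle.
-/

open Set
open scoped symmDiff

variable {V E : Type} {ends : E → Sym2 V}

def incidenceSet (ends : E → Sym2 V) (v : V) : Set E := {f | v ∈ ends f}

lemma cdeg_eq_ncard_inter_incidenceSet (C : Set E) (v : V) :
    cdeg ends C v = (C ∩ incidenceSet ends v).ncard := rfl

lemma isPM_iff_cdeg_eq_one {M : Set E} : IsPM ends M ↔ ∀ v, cdeg ends M v = 1 := by
  refine forall_congr' fun v => ?_
  rw [cdeg, ncard_eq_one]
  simp only [ExistsUnique, eq_singleton_iff_unique_mem, mem_ofPred_eq]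

lemma IsPM.cdeg_eq_one {M : Set E} (hM : IsPM ends M) (v : V) : cdeg ends M v = 1 :=
  isPM_iff_cdeg_eq_one.mp hM v

theorem IsPM.symmDiff_of_isAlternating [Finite E] {M C : Set E} (hM : IsPM ends M)
    (hC : ∀ v, cdeg ends C v = 0 ∨ cdeg ends C v = 2) (halt : IsAlternating ends M C) :
    IsPM ends (M ∆ C) := by
  refine isPM_iff_cdeg_eq_one.mpr fun v => ?_
  have hMv := hM.cdeg_eq_one v
  rw [cdeg_eq_ncard_inter_incidenceSet] at hMv ⊢
  rw [inter_symmDiff_distrib_right]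
  rcases hC v with h0 | h2
  · rw [cdeg_eq_ncard_inter_incidenceSet, ncard_eq_zero] at h0
    rwa [h0, ← bot_eq_empty, symmDiff_bot]
  · have h1 := halt v h2
    rw [cdeg_eq_ncard_inter_incidenceSet] at h1 h2
    have hsub : M ∩ incidenceSet ends v ⊆ C ∩ incidenceSet ends v := by
      have hCM : C ∩ M ∩ incidenceSet ends v = M ∩ incidenceSet ends v :=
        eq_of_subset_of_ncard_le (fun f hf => ⟨hf.1.2, hf.2⟩) (by rw [hMv, h1])
      exact hCM ▸ fun f hf => ⟨hf.1.1, hf.2⟩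
    rw [symmDiff_of_le hsub, ncard_sdiff hsub, h2, hMv]

theorem IsCycle.mem_of_isAlternating [Finite E] {e : E} {Me C : Set E} (hMe : IsPM ends Me)
    (he : e ∈ Me) (huniq : ∀ M, IsPM ends M → e ∈ M → M = Me) (hC : IsCycle ends C)
    (halt : IsAlternating ends Me C) : e ∈ C := by
  by_contra heC
  have hsymm : Me ∆ C = Me :=
    huniq _ (hMe.symmDiff_of_isAlternating hC.2.1 halt) (Or.inl ⟨he, heC⟩)
  exact hC.1.ne_empty (symmDiff_eq_left.mp hsymm)

lemma EdgeConn.symm {C : Set E} {u w : V} (h : EdgeConn ends C u w) : EdgeConn ends C w u :=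
  Std.Symm.symm (self := @Relation.ReflTransGen.stdSymm _ _
    ⟨fun _ _ ⟨f, hf, hfe⟩ => ⟨f, hf, by rw [hfe, Sym2.eq_swap]⟩⟩) _ _ h

lemma edgeConn_of_mem_ends {C : Set E} {f : E} {u w : V} (hf : f ∈ C) (hu : u ∈ ends f)
    (hw : w ∈ ends f) : EdgeConn ends C u w := by
  by_cases huw : u = w
  · exact huw ▸ Relation.ReflTransGen.refl
  · exact Relation.ReflTransGen.single ⟨f, hf, (Sym2.mem_and_mem_iff huw).mp ⟨hu, hw⟩⟩

def component (ends : E → Sym2 V) (D : Set E) (v : V) : Set E :=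
  {f | f ∈ D ∧ ∃ u ∈ ends f, EdgeConn ends D v u}

section component

variable {D : Set E} {v w : V}

lemma component_inter_incidenceSet_of_edgeConn (h : EdgeConn ends D v w) :
    component ends D v ∩ incidenceSet ends w = D ∩ incidenceSet ends w :=
  Subset.antisymm (fun _ hf => ⟨hf.1.1, hf.2⟩) fun _ hf => ⟨⟨hf.1, w, hf.2, h⟩, hf.2⟩

lemma component_inter_incidenceSet_of_not_edgeConn (h : ¬ EdgeConn ends D v w) :
    component ends D v ∩ incidenceSet ends w = ∅ :=
  eq_empty_of_forall_notMem fun _ ⟨⟨hf, _, hu, hvu⟩, hw⟩ =>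
    h (hvu.trans (edgeConn_of_mem_ends hf hu hw))

lemma edgeConn_of_cdeg_component_ne_zero (h : cdeg ends (component ends D v) w ≠ 0) :
    EdgeConn ends D v w := by
  by_contra hvw
  rw [cdeg_eq_ncard_inter_incidenceSet, component_inter_incidenceSet_of_not_edgeConn hvw,
    ncard_empty] at h
  exact h rfl

lemma EdgeConn.component (h : EdgeConn ends D v w) : EdgeConn ends (component ends D v) v w := by
  induction h with
  | refl => exact Relation.ReflTransGen.refl
  | tail hvu step ih =>
      obtain ⟨f, hf, hfe⟩ := step
      exact ih.tail ⟨f, ⟨hf, _, hfe ▸ Sym2.mem_mk_left _ _, hvu⟩, hfe⟩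

theorem isCycle_component (hD : ∀ w, cdeg ends D w = 0 ∨ cdeg ends D w = 2)
    (hv : cdeg ends D v = 2) : IsCycle ends (component ends D v) := by
  refine ⟨?_, fun w => ?_, fun u w hu hw => ?_⟩
  · obtain ⟨f, hf, hvf⟩ := nonempty_of_ncard_ne_zero (hv.trans_ne two_ne_zero)
    exact ⟨f, hf, v, hvf, Relation.ReflTransGen.refl⟩
  · by_cases hvw : EdgeConn ends D v w
    · rw [cdeg_eq_ncard_inter_incidenceSet, component_inter_incidenceSet_of_edgeConn hvw]
      exact hD w
    · left
      rw [cdeg_eq_ncard_inter_incidenceSet, component_inter_incidenceSet_of_not_edgeConn hvw,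
        ncard_empty]
  · have hvu := edgeConn_of_cdeg_component_ne_zero (hu.trans_ne two_ne_zero)
    have hvw := edgeConn_of_cdeg_component_ne_zero (hw.trans_ne two_ne_zero)
    exact hvu.component.symm.trans hvw.component

theorem IsAlternating.component {M : Set E} (halt : IsAlternating ends M D) :
    IsAlternating ends M (component ends D v) := by
  intro w hw
  have hvw := edgeConn_of_cdeg_component_ne_zero (hw.trans_ne two_ne_zero)
  rw [cdeg_eq_ncard_inter_incidenceSet, component_inter_incidenceSet_of_edgeConn hvw] at hw
  rw [cdeg_eq_ncard_inter_incidenceSet, inter_right_comm,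
    component_inter_incidenceSet_of_edgeConn hvw, inter_right_comm]
  exact halt w hw

end component

lemma IsPM.cdeg_union_eq_two [Finite E] {M M' : Set E} (hM : IsPM ends M) (hM' : IsPM ends M')
    (hdisj : Disjoint M M') (v : V) : cdeg ends (M ∪ M') v = 2 := by
  rw [cdeg_eq_ncard_inter_incidenceSet, union_inter_distrib_right,
    ncard_union_eq (hdisj.mono inter_subset_left inter_subset_left),
    ← cdeg_eq_ncard_inter_incidenceSet, ← cdeg_eq_ncard_inter_incidenceSet, hM.cdeg_eq_one,
    hM'.cdeg_eq_one]

lemma IsPM.isAlternating_union_right {M Me : Set E} (hMe : IsPM ends Me) :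
    IsAlternating ends Me (M ∪ Me) := fun v _ => by
  rw [union_inter_cancel_right]
  exact hMe.cdeg_eq_one v

theorem IsPM.isHamCycle_union [Finite E] {e : E} {M Me : Set E} (hM : IsPM ends M)
    (hMe : IsPM ends Me) (he : e ∈ Me) (hdisj : Disjoint M Me)
    (hcyc : ∀ C, IsCycle ends C → IsAlternating ends Me C → e ∈ C) :
    IsHamCycle ends (M ∪ Me) := by
  have hdeg := hM.cdeg_union_eq_two hMe hdisj
  have hreach : ∀ w, ∃ x ∈ ends e, EdgeConn ends (M ∪ Me) w x := fun w =>
    (hcyc _ (isCycle_component (fun u => Or.inr (hdeg u)) (hdeg w))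
      hMe.isAlternating_union_right.component).2
  refine ⟨⟨⟨e, Or.inr he⟩, fun v => Or.inr (hdeg v), fun u w _ _ => ?_⟩, hdeg⟩
  obtain ⟨x, hx, hux⟩ := hreach u
  obtain ⟨y, hy, hwy⟩ := hreach w
  exact (hux.trans (edgeConn_of_mem_ends (Or.inr he) hx hy)).trans hwy.symm

theorem stmt4_general {V E : Type} [Fintype E]
    (ends : E → Sym2 V)
    (e : E) (Me : Set E) (hMe : IsPM ends Me ∧ e ∈ Me)
    (huniq : ∀ M, IsPM ends M → e ∈ M → M = Me) :
    (∀ C, IsCycle ends C → IsAlternating ends Me C → e ∈ C) ∧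
      (∀ M, IsPM ends M → Disjoint M Me → IsHamCycle ends (M ∪ Me)) := by
  obtain ⟨hPMe, he⟩ := hMe
  have hcyc : ∀ C, IsCycle ends C → IsAlternating ends Me C → e ∈ C :=
    fun C hC halt => hC.mem_of_isAlternating hPMe he huniq halt
  exact ⟨hcyc, fun M hM hdisj => hM.isHamCycle_union hPMe he hdisj hcyc⟩

/-- If `e` is a solitary edge of a finite loopless multigraph `G` and `M_e` is the
unique perfect matching containing `e`, then every `M_e`-alternating cycle contains
`e`; consequently, if `M` is a perfect matching disjoint from `M_e`, then
`M ∪ M_e` is a Hamiltonian cycle of `G`. -/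
theorem stmt4 {V E : Type} [Fintype V] [Fintype E]
    (ends : E → Sym2 V) (hloop : ∀ e, ¬ (ends e).IsDiag)
    (e : E) (Me : Set E) (hMe : IsPM ends Me ∧ e ∈ Me)
    (huniq : ∀ M, IsPM ends M → e ∈ M → M = Me) :
    (∀ C, IsCycle ends C → IsAlternating ends Me C → e ∈ C) ∧
      (∀ M, IsPM ends M → Disjoint M Me → IsHamCycle ends (M ∪ Me)) :=
  stmt4_general ends e Me hMe huniq
end

section
/- Each solitary equivalence class S of a matching covered graph G is contained in exactly one perfect matching; moreover, any perfect matching of G contains at most one solitary class, so any two distinct solitary classes are mutually exclusive. -/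
/-- A matching covered graph: connected, of order at least two, and every edge
lies in some perfect matching. -/
def IsMC {V E : Type} (ends : E → Sym2 V) : Prop :=
  (toSimple ends).Connected ∧ 2 ≤ Nat.card V ∧ ∀ e, ∃ M, IsPM ends M ∧ e ∈ M

/-- Edge `e` depends on edge `f`: every perfect matching containing `e` also
contains `f`. -/
def Dep {V E : Type} (ends : E → Sym2 V) (e f : E) : Prop :=
  ∀ M, IsPM ends M → e ∈ M → f ∈ M

/-- Edges `e` and `f` are mutually dependent. -/
def MutDep {V E : Type} (ends : E → Sym2 V) (e f : E) : Prop :=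
  Dep ends e f ∧ Dep ends f e

/-- A solitary edge: it lies in exactly one perfect matching. -/
def Solitary {V E : Type} (ends : E → Sym2 V) (e : E) : Prop :=
  ∃! M, IsPM ends M ∧ e ∈ M

/-! A solitary edge `e` lies in a unique perfect matching `M`, so `e` depends on every edge of `M`.
Hence the class of `e` lies in `M` and pins it down, and two solitary edges in a common perfect
matching depend on each other, i.e. have the same class. -/

section

variable {V E : Type} {ends : E → Sym2 V}

theorem Dep.trans {e f g : E} (hef : Dep ends e f) (hfg : Dep ends f g) : Dep ends e g :=
  fun M hM he => hfg M hM (hef M hM he)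

theorem MutDep.refl (e : E) : MutDep ends e e :=
  ⟨fun _ _ h => h, fun _ _ h => h⟩

theorem MutDep.trans {e f g : E} (hef : MutDep ends e f) (hfg : MutDep ends f g) :
    MutDep ends e g :=
  ⟨hef.1.trans hfg.1, hfg.2.trans hef.2⟩

theorem MutDep.symm {e f : E} (h : MutDep ends e f) : MutDep ends f e :=
  ⟨h.2, h.1⟩

theorem MutDep.setOf_eq {e₁ e₂ : E} (h : MutDep ends e₁ e₂) :
    {f | MutDep ends e₁ f} = {f | MutDep ends e₂ f} :=
  Set.ext fun _ => ⟨h.symm.trans, h.trans⟩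

theorem Solitary.dep_of_mem {e f : E} (he : Solitary ends e) {M : Set E} (hM : IsPM ends M)
    (heM : e ∈ M) (hfM : f ∈ M) : Dep ends e f := by
  obtain ⟨M₀, -, huniq⟩ := he
  intro N hN heN
  rwa [huniq N ⟨hN, heN⟩, ← huniq M ⟨hM, heM⟩]

theorem Solitary.mutDep_of_mem {e₁ e₂ : E} (h₁ : Solitary ends e₁) (h₂ : Solitary ends e₂)
    {M : Set E} (hM : IsPM ends M) (h₁M : e₁ ∈ M) (h₂M : e₂ ∈ M) : MutDep ends e₁ e₂ :=
  ⟨h₁.dep_of_mem hM h₁M h₂M, h₂.dep_of_mem hM h₂M h₁M⟩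

theorem Solitary.existsUnique_setOf_mutDep_subset {e : E} (he : Solitary ends e) :
    ∃! M, IsPM ends M ∧ {f | MutDep ends e f} ⊆ M := by
  obtain ⟨M, ⟨hM, heM⟩, huniq⟩ := he
  refine ⟨M, ⟨hM, fun f hf => hf.1 M hM heM⟩, ?_⟩
  rintro N ⟨hN, hsub⟩
  exact huniq N ⟨hN, hsub (MutDep.refl e)⟩

end

theorem stmt8_general {V E : Type}
    (ends : E → Sym2 V) :
    (∀ e, Solitary ends e → ∃! M, IsPM ends M ∧ {f | MutDep ends e f} ⊆ M) ∧
      (∀ M, IsPM ends M → ∀ e₁ e₂, Solitary ends e₁ → Solitary ends e₂ →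
        {f | MutDep ends e₁ f} ⊆ M → {f | MutDep ends e₂ f} ⊆ M →
        {f | MutDep ends e₁ f} = {f | MutDep ends e₂ f}) :=
  ⟨fun _ he => he.existsUnique_setOf_mutDep_subset,
    fun _ hM e₁ e₂ h₁ h₂ h₁M h₂M =>
      (h₁.mutDep_of_mem h₂ hM (h₁M (MutDep.refl e₁)) (h₂M (MutDep.refl e₂))).setOf_eq⟩

/-- In a matching covered graph: each solitary class is contained in exactly
one perfect matching; moreover, any perfect matching contains at most one
solitary class (so any two distinct solitary classes are mutually exclusive). -/
theorem stmt8 {V E : Type} [Fintype V] [Fintype E]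
    (ends : E → Sym2 V) (hG : IsMC ends) :
    (∀ e, Solitary ends e → ∃! M, IsPM ends M ∧ {f | MutDep ends e f} ⊆ M) ∧
      (∀ M, IsPM ends M → ∀ e₁ e₂, Solitary ends e₁ → Solitary ends e₂ →
        {f | MutDep ends e₁ f} ⊆ M → {f | MutDep ends e₂ f} ⊆ M →
        {f | MutDep ends e₁ f} = {f | MutDep ends e₂ f}) :=
  stmt8_general ends
end

section
/- For an r-graph G with a 2-edge-cut C, both marked C-components of G are also r-graphs (for the same r). -/
noncomputable section
open scoped Classical

/-- Push a vertex of `X` into the subtype `↥X` (default `a` off `X`). -/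
noncomputable def restrVert {V : Type} (X : Set V) (a : ↥X) (v : V) : ↥X :=
  if h : v ∈ X then ⟨v, h⟩ else a

/-- The marked `C`-component of a multigraph on the shore `X`: its vertices are
those of `X`, its edges are the edges with both ends in `X` together with one
extra marker edge joining `a` and `b` (the ends in `X` of the two cut edges). -/
noncomputable def markedEnds {V E : Type} (ends : E → Sym2 V) (X : Set V)
    (a b : ↥X) : ({e : E // ∀ v ∈ ends e, v ∈ X} ⊕ Unit) → Sym2 ↥X
  | Sum.inl e => (ends e.val).map (restrVert X a)
  | Sum.inr _ => s(a, b)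

/-!
The shore `X` is even, since its cut has `2 < r` edges. Hence `u₁ ≠ v₁`: otherwise `X \ {u₁}`
would be an odd set whose cut consists of the `r - 2` other edges at `u₁`. So the marker
replaces exactly one cut edge at each of `u₁` and `v₁`, and the marked component has the same
degrees as `G`; it is connected because a walk of `G` can only leave `X` at `u₁` or `v₁`.
An odd set `Y` of the marked component may be taken not to contain both `u₁` and `v₁` (else
pass to its complement in the even set `X`). Then the edges of `∂_G(Y)` are edges of `∂(Y)`,
except at most one cut edge, which becomes the marker; so `|∂(Y)| ≥ |∂_G(Y)| ≥ r`.
-/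

section General

variable {V E : Type} {ends : E → Sym2 V} {X : Set V}

lemma cut_compl (ends : E → Sym2 V) (X : Set V) : Cut ends Xᶜ = Cut ends X := by
  ext e
  constructor
  · rintro ⟨u, hu, w, hw, h⟩
    exact ⟨w, not_not.mp hw, u, hu, h.trans Sym2.eq_swap⟩
  · rintro ⟨u, hu, w, hw, h⟩
    exact ⟨w, hw, u, not_not.mpr hu, h.trans Sym2.eq_swap⟩

lemma not_forall_mem_of_mem_cut {e : E} (he : e ∈ Cut ends X) : ¬ ∀ v ∈ ends e, v ∈ X := by
  obtain ⟨u, -, w, hw, h⟩ := he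
  exact fun hall => hw (hall w (h ▸ Sym2.mem_mk_right u w))

lemma mem_cut_of_not_forall_mem {e : E} {x : V} (hx : x ∈ X) (hxe : x ∈ ends e)
    (he : ¬ ∀ v ∈ ends e, v ∈ X) : e ∈ Cut ends X := by
  obtain ⟨w, hw⟩ := Sym2.mem_iff_exists.mp hxe
  refine ⟨x, hx, w, fun hwX => he fun v hv => ?_, hw⟩
  rcases Sym2.mem_iff.mp (hw ▸ hv) with rfl | rfl
  exacts [hx, hwX]

lemma even_ncard_of_ncard_cut_lt {r : ℕ}
    (hcut : ∀ Y : Set V, Odd Y.ncard → r ≤ (Cut ends Y).ncard)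
    (hX : (Cut ends X).ncard < r) : Even X.ncard := by
  by_contra hodd
  exact (hcut X (Nat.not_even_iff_odd.mp hodd)).not_gt hX

lemma cut_sdiff_singleton_subset {u : V} (hu : u ∈ X) (hends : Cut ends X ⊆ {e | u ∈ ends e}) :
    Cut ends (X \ {u}) ⊆ {e | u ∈ ends e} \ Cut ends X := by
  rintro e ⟨p, ⟨hpX, hpu⟩, q, hq, he⟩
  have hqu : q = u := by
    by_contra hqu
    by_cases hqX : q ∈ X
    · exact hq ⟨hqX, hqu⟩
    · have hue : u ∈ ends e := hends ⟨p, hpX, q, hqX, he⟩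
      rcases Sym2.mem_iff.mp (he ▸ hue) with h | h
      · exact hpu h.symm
      · exact hqX (h ▸ hu)
  rw [hqu] at he
  refine ⟨show u ∈ ends e from he ▸ Sym2.mem_mk_right p u,
    not_forall_mem_of_mem_cut.mt (not_not.mpr fun v hv => ?_)⟩
  rcases Sym2.mem_iff.mp (he ▸ hv) with rfl | rfl
  exacts [hpX, hu]

lemma ncard_cut_eq_zero_of_subset_ends [Finite V] [Finite E] {r : ℕ}
    (hdeg : ∀ v, deg ends v = r) (hcut : ∀ Y : Set V, Odd Y.ncard → r ≤ (Cut ends Y).ncard)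
    (hX : Even X.ncard) {u : V} (hu : u ∈ X) (hends : Cut ends X ⊆ {e | u ∈ ends e}) :
    (Cut ends X).ncard = 0 := by
  have hodd : Odd (X \ {u}).ncard := by
    rw [Set.ncard_sdiff_singleton_of_mem hu]
    exact Nat.Even.sub_odd ((Set.ncard_pos).mpr ⟨u, hu⟩) hX odd_one
  have hle : r ≤ r - (Cut ends X).ncard := calc
    r ≤ (Cut ends (X \ {u})).ncard := hcut _ hodd
    _ ≤ ({e | u ∈ ends e} \ Cut ends X).ncard :=
      Set.ncard_le_ncard (cut_sdiff_singleton_subset hu hends)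
    _ = r - (Cut ends X).ncard := by rw [Set.ncard_sdiff hends, ← hdeg u, deg]
  have hCr : (Cut ends X).ncard ≤ r := hdeg u ▸ Set.ncard_le_ncard hends
  omega

lemma SimpleGraph.Preconnected.of_reachable_of_adj {W : Type} {G : SimpleGraph V}
    {H : SimpleGraph W} (hG : G.Preconnected) (φ : V → W) (hφ : Function.Surjective φ)
    (h : ∀ x y, G.Adj x y → H.Reachable (φ x) (φ y)) : H.Preconnected := by
  intro w₁ w₂
  obtain ⟨x, rfl⟩ := hφ w₁
  obtain ⟨y, rfl⟩ := hφ w₂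
  rw [SimpleGraph.reachable_iff_reflTransGen]
  refine Relation.ReflTransGen.lift' φ (fun x y hxy => ?_) _ _
    ((G.reachable_iff_reflTransGen x y).mp (hG x y))
  exact (H.reachable_iff_reflTransGen _ _).mp (h x y hxy)

end General

section Marked

variable {V E : Type} {ends : E → Sym2 V} {X : Set V} {a b : X}

lemma restrVert_of_mem (a : X) {v : V} (hv : v ∈ X) : restrVert X a v = ⟨v, hv⟩ := dif_pos hv

lemma restrVert_of_notMem (a : X) {v : V} (hv : v ∉ X) : restrVert X a v = a := dif_neg hv

lemma map_val_markedEnds_inl (e : {e : E // ∀ v ∈ ends e, v ∈ X}) :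
    (markedEnds ends X a b (.inl e)).map Subtype.val = ends e.1 := by
  change ((ends e.1).map (restrVert X a)).map Subtype.val = ends e.1
  rw [Sym2.map_map]
  calc (ends e.1).map (Subtype.val ∘ restrVert X a) = (ends e.1).map id :=
        Sym2.map_congr fun v hv => by simp [restrVert_of_mem a (e.2 v hv)]
    _ = ends e.1 := congrFun Sym2.map_id _

lemma mem_markedEnds_inl {e : {e : E // ∀ v ∈ ends e, v ∈ X}} {x : X} :
    x ∈ markedEnds ends X a b (.inl e) ↔ (x : V) ∈ ends e.1 := by
  rw [← map_val_markedEnds_inl e (b := b), Sym2.mem_map]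
  exact ⟨fun hx => ⟨x, hx, rfl⟩, fun ⟨y, hy, hyx⟩ => Subtype.ext hyx ▸ hy⟩

lemma markedEnds_not_isDiag (hloop : ∀ e, ¬ (ends e).IsDiag) (hab : a ≠ b) :
    ∀ e, ¬ (markedEnds ends X a b e).IsDiag
  | .inl e => by
    rw [← Sym2.isDiag_map Subtype.val_injective, map_val_markedEnds_inl]
    exact hloop e.1
  | .inr _ => Sym2.mk_isDiag_iff.not.mpr hab

lemma toSimple_markedEnds_adj {x w : V} (hxw : (toSimple ends).Adj x w) (hx : x ∈ X)
    (hw : w ∈ X) : (toSimple (markedEnds ends X a b)).Adj ⟨x, hx⟩ ⟨w, hw⟩ := by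
  obtain ⟨hne, e, he⟩ := hxw
  have hall : ∀ v ∈ ends e, v ∈ X := fun v hv => by
    rcases Sym2.mem_iff.mp (he ▸ hv) with rfl | rfl
    exacts [hx, hw]
  refine ⟨fun h => hne (congrArg Subtype.val h), .inl ⟨e, hall⟩, ?_⟩
  exact Sym2.map.injective Subtype.val_injective ((map_val_markedEnds_inl _).trans he)

lemma toSimple_markedEnds_reachable_marker :
    (toSimple (markedEnds ends X a b)).Reachable a b := by
  by_cases hab : a = b
  · exact hab ▸ SimpleGraph.Reachable.refl a
  · exact SimpleGraph.Adj.reachable ⟨hab, .inr (), rfl⟩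

/-- Walks of `G` are projected into `X` by sending every vertex outside `X` to `a`; a step
leaving `X` starts at an end of the marker, which is joined to `a`. -/
lemma toSimple_markedEnds_connected (hconn : (toSimple ends).Connected)
    (hexit : ∀ e ∈ Cut ends X, ∀ x : X, (x : V) ∈ ends e → x = a ∨ x = b) :
    (toSimple (markedEnds ends X a b)).Connected := by
  have hleave : ∀ x w, (toSimple ends).Adj x w → (hx : x ∈ X) → w ∉ X →
      (toSimple (markedEnds ends X a b)).Reachable ⟨x, hx⟩ a := by
    rintro x w ⟨-, e, he⟩ hx hw
    rcases hexit e ⟨x, hx, w, hw, he⟩ ⟨x, hx⟩ (he ▸ Sym2.mem_mk_left x w) with h | h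
    · exact h ▸ SimpleGraph.Reachable.refl _
    · exact h ▸ toSimple_markedEnds_reachable_marker.symm
  have : Nonempty X := ⟨a⟩
  refine ⟨hconn.preconnected.of_reachable_of_adj (restrVert X a)
    (fun x => ⟨x, restrVert_of_mem a x.2⟩) fun x w hxw => ?_⟩
  by_cases hx : x ∈ X <;> by_cases hw : w ∈ X
  · rw [restrVert_of_mem a hx, restrVert_of_mem a hw]
    exact (toSimple_markedEnds_adj hxw hx hw).reachable
  · rw [restrVert_of_mem a hx, restrVert_of_notMem a hw]
    exact hleave x w hxw hx hw
  · rw [restrVert_of_notMem a hx, restrVert_of_mem a hw]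
    exact (hleave w x hxw.symm hw hx).symm
  · rw [restrVert_of_notMem a hx, restrVert_of_notMem a hw]

/-- An edge of `G` as an edge of the marked component on `X`: itself if both its ends lie
in `X`, the marker edge otherwise. -/
def markedEdge (ends : E → Sym2 V) (X : Set V) (e : E) : {e : E // ∀ v ∈ ends e, v ∈ X} ⊕ Unit :=
  if h : ∀ v ∈ ends e, v ∈ X then .inl ⟨e, h⟩ else .inr ()

lemma markedEdge_of_forall_mem {e : E} (h : ∀ v ∈ ends e, v ∈ X) :
    markedEdge ends X e = .inl ⟨e, h⟩ := dif_pos h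

lemma markedEdge_of_not_forall_mem {e : E} (h : ¬ ∀ v ∈ ends e, v ∈ X) :
    markedEdge ends X e = .inr () := dif_neg h

lemma injOn_markedEdge {S : Set E}
    (hS : ∀ e₁ ∈ S, ∀ e₂ ∈ S, (¬ ∀ v ∈ ends e₁, v ∈ X) → (¬ ∀ v ∈ ends e₂, v ∈ X) → e₁ = e₂) :
    S.InjOn (markedEdge ends X) := by
  intro e₁ h₁ e₂ h₂ heq
  by_cases i₁ : ∀ v ∈ ends e₁, v ∈ X
  · by_cases i₂ : ∀ v ∈ ends e₂, v ∈ X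
    · rw [markedEdge_of_forall_mem i₁, markedEdge_of_forall_mem i₂] at heq
      exact congrArg Subtype.val (Sum.inl_injective heq)
    · rw [markedEdge_of_forall_mem i₁, markedEdge_of_not_forall_mem i₂] at heq
      exact (Sum.inl_ne_inr heq).elim
  · by_cases i₂ : ∀ v ∈ ends e₂, v ∈ X
    · rw [markedEdge_of_not_forall_mem i₁, markedEdge_of_forall_mem i₂] at heq
      exact (Sum.inr_ne_inl heq).elim
    · exact hS e₁ h₁ e₂ h₂ i₁ i₂

end Marked

section TwoCut

variable {V E : Type} {ends : E → Sym2 V} {X : Set V} {f f' : E} {u₁ u₂ v₁ v₂ : V}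

lemma eq_and_eq_of_mem_cut_eq_pair (hC : Cut ends X = {f, f'}) (hu₂ : u₂ ∉ X) (hv₂ : v₂ ∉ X)
    (hf : ends f = s(u₁, u₂)) (hf' : ends f' = s(v₁, v₂)) {e : E} (he : e ∈ Cut ends X)
    {x : V} (hx : x ∈ X) (hxe : x ∈ ends e) : (e = f ∧ x = u₁) ∨ (e = f' ∧ x = v₁) := by
  rw [hC] at he
  rcases he with rfl | rfl
  · refine .inl ⟨rfl, (Sym2.mem_iff.mp (hf ▸ hxe)).resolve_right ?_⟩
    rintro rfl
    exact hu₂ hx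
  · refine .inr ⟨rfl, (Sym2.mem_iff.mp (hf' ▸ hxe)).resolve_right ?_⟩
    rintro rfl
    exact hv₂ hx

lemma deg_markedEnds (hC : Cut ends X = {f, f'}) (hu₁ : u₁ ∈ X) (hu₂ : u₂ ∉ X)
    (hv₁ : v₁ ∈ X) (hv₂ : v₂ ∉ X) (hf : ends f = s(u₁, u₂)) (hf' : ends f' = s(v₁, v₂))
    (huv : u₁ ≠ v₁) (x : X) : deg (markedEnds ends X ⟨u₁, hu₁⟩ ⟨v₁, hv₁⟩) x = deg ends x := by
  have hclass {e : E} (hxe : (x : V) ∈ ends e) (he : ¬ ∀ v ∈ ends e, v ∈ X) :=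
    eq_and_eq_of_mem_cut_eq_pair hC hu₂ hv₂ hf hf' (mem_cut_of_not_forall_mem x.2 hxe he) x.2 hxe
  have hinj : {e | (x : V) ∈ ends e}.InjOn (markedEdge ends X) := by
    refine injOn_markedEdge fun e₁ h₁ e₂ h₂ i₁ i₂ => ?_
    rcases hclass h₁ i₁ with ⟨rfl, hx₁⟩ | ⟨rfl, hx₁⟩ <;>
      rcases hclass h₂ i₂ with ⟨rfl, hx₂⟩ | ⟨rfl, hx₂⟩
    exacts [rfl, (huv (hx₁.symm.trans hx₂)).elim, (huv (hx₂.symm.trans hx₁)).elim, rfl]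
  have hmarker {e : E} (he : e ∈ ({f, f'} : Set E)) : markedEdge ends X e = .inr () :=
    markedEdge_of_not_forall_mem (not_forall_mem_of_mem_cut (hC ▸ he))
  have himage : markedEdge ends X '' {e | (x : V) ∈ ends e} =
      {e' | x ∈ markedEnds ends X ⟨u₁, hu₁⟩ ⟨v₁, hv₁⟩ e'} := by
    ext e'
    constructor
    · rintro ⟨e, hxe, rfl⟩
      by_cases he : ∀ v ∈ ends e, v ∈ X
      · rw [markedEdge_of_forall_mem he]
        exact mem_markedEnds_inl.mpr hxe
      · rw [markedEdge_of_not_forall_mem he]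
        rcases hclass hxe he with ⟨-, h⟩ | ⟨-, h⟩
        exacts [Sym2.mem_iff.mpr (.inl (Subtype.ext h)), Sym2.mem_iff.mpr (.inr (Subtype.ext h))]
    · intro hx
      cases e' with
      | inl e => exact ⟨e.1, mem_markedEnds_inl.mp hx, markedEdge_of_forall_mem e.2⟩
      | inr =>
        rcases Sym2.mem_iff.mp hx with rfl | rfl
        · exact ⟨f, show u₁ ∈ ends f from hf ▸ Sym2.mem_mk_left u₁ u₂, hmarker (.inl rfl)⟩
        · exact ⟨f', show v₁ ∈ ends f' from hf' ▸ Sym2.mem_mk_left v₁ v₂, hmarker (.inr rfl)⟩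
  unfold deg
  rw [← himage, hinj.ncard_image]

lemma le_ncard_cut_markedEnds_of_not_both_mem [Finite E] {r : ℕ}
    (hcut : ∀ Z : Set V, Odd Z.ncard → r ≤ (Cut ends Z).ncard) (hC : Cut ends X = {f, f'})
    (hu₁ : u₁ ∈ X) (hu₂ : u₂ ∉ X) (hv₁ : v₁ ∈ X) (hv₂ : v₂ ∉ X) (hf : ends f = s(u₁, u₂))
    (hf' : ends f' = s(v₁, v₂)) {Y : Set X} (hY : Odd Y.ncard)
    (hab : ¬ (⟨u₁, hu₁⟩ ∈ Y ∧ ⟨v₁, hv₁⟩ ∈ Y)) :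
    r ≤ (Cut (markedEnds ends X ⟨u₁, hu₁⟩ ⟨v₁, hv₁⟩) Y).ncard := by
  have hout : ∀ e ∈ Cut ends (Subtype.val '' Y), (¬ ∀ v ∈ ends e, v ∈ X) →
      (e = f ∧ ⟨u₁, hu₁⟩ ∈ Y) ∨ (e = f' ∧ ⟨v₁, hv₁⟩ ∈ Y) := by
    rintro e ⟨_, ⟨y, hy, rfl⟩, q, -, he⟩ hout
    have hye : (y : V) ∈ ends e := he ▸ Sym2.mem_mk_left _ q
    rcases eq_and_eq_of_mem_cut_eq_pair hC hu₂ hv₂ hf hf'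
      (mem_cut_of_not_forall_mem y.2 hye hout) y.2 hye with ⟨rfl, h⟩ | ⟨rfl, h⟩
    · exact .inl ⟨rfl, (Subtype.ext h : y = ⟨u₁, hu₁⟩) ▸ hy⟩
    · exact .inr ⟨rfl, (Subtype.ext h : y = ⟨v₁, hv₁⟩) ▸ hy⟩
  have hinj : (Cut ends (Subtype.val '' Y)).InjOn (markedEdge ends X) := by
    refine injOn_markedEdge fun e₁ h₁ e₂ h₂ i₁ i₂ => ?_
    rcases hout e₁ h₁ i₁ with ⟨rfl, h₁⟩ | ⟨rfl, h₁⟩ <;>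
      rcases hout e₂ h₂ i₂ with ⟨rfl, h₂⟩ | ⟨rfl, h₂⟩
    exacts [rfl, (hab ⟨h₁, h₂⟩).elim, (hab ⟨h₂, h₁⟩).elim, rfl]
  have hmaps : (Cut ends (Subtype.val '' Y)).MapsTo (markedEdge ends X)
      (Cut (markedEnds ends X ⟨u₁, hu₁⟩ ⟨v₁, hv₁⟩) Y) := by
    intro e he
    by_cases hin : ∀ v ∈ ends e, v ∈ X
    · rw [markedEdge_of_forall_mem hin]
      obtain ⟨_, ⟨y, hy, rfl⟩, q, hq, he⟩ := he
      have hqX : q ∈ X := hin q (he ▸ Sym2.mem_mk_right _ q)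
      refine ⟨y, hy, ⟨q, hqX⟩, fun hqY => hq ⟨_, hqY, rfl⟩, ?_⟩
      exact Sym2.map.injective Subtype.val_injective ((map_val_markedEnds_inl _).trans he)
    · rw [markedEdge_of_not_forall_mem hin]
      rcases hout e he hin with ⟨-, ha⟩ | ⟨-, hb⟩
      · exact ⟨_, ha, _, fun hb => hab ⟨ha, hb⟩, rfl⟩
      · exact ⟨_, hb, _, fun ha => hab ⟨ha, hb⟩, Sym2.eq_swap⟩
  calc r ≤ (Cut ends (Subtype.val '' Y)).ncard :=
        hcut _ (by rwa [Set.ncard_image_of_injective _ Subtype.val_injective])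
    _ = (markedEdge ends X '' Cut ends (Subtype.val '' Y)).ncard := hinj.ncard_image.symm
    _ ≤ _ := Set.ncard_le_ncard hmaps.image_subset

lemma le_ncard_cut_markedEnds [Finite V] [Finite E] {r : ℕ}
    (hcut : ∀ Z : Set V, Odd Z.ncard → r ≤ (Cut ends Z).ncard) (hX : Even X.ncard)
    (hC : Cut ends X = {f, f'}) (hu₁ : u₁ ∈ X) (hu₂ : u₂ ∉ X) (hv₁ : v₁ ∈ X) (hv₂ : v₂ ∉ X)
    (hf : ends f = s(u₁, u₂)) (hf' : ends f' = s(v₁, v₂)) (Y : Set X) (hY : Odd Y.ncard) :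
    r ≤ (Cut (markedEnds ends X ⟨u₁, hu₁⟩ ⟨v₁, hv₁⟩) Y).ncard := by
  by_cases hab : ⟨u₁, hu₁⟩ ∈ Y ∧ ⟨v₁, hv₁⟩ ∈ Y
  · have hYc : Odd Yᶜ.ncard := by
      have hsum := Set.ncard_add_ncard_compl Y
      rw [Nat.card_coe_set_eq] at hsum
      rw [← hsum] at hX
      rw [← Nat.not_even_iff_odd] at hY ⊢
      exact fun h => hY ((Nat.even_add.mp hX).mpr h)
    rw [← cut_compl]
    exact le_ncard_cut_markedEnds_of_not_both_mem hcut hC hu₁ hu₂ hv₁ hv₂ hf hf' hYc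
      fun h => h.1 hab.1
  · exact le_ncard_cut_markedEnds_of_not_both_mem hcut hC hu₁ hu₂ hv₁ hv₂ hf hf' hY hab

theorem isRGraph_markedEnds [Finite V] [Finite E] {r : ℕ} (hr : 3 ≤ r) (hG : IsRGraph r ends)
    (hff : f ≠ f') (hC : Cut ends X = {f, f'}) (hu₁ : u₁ ∈ X) (hu₂ : u₂ ∉ X) (hv₁ : v₁ ∈ X)
    (hv₂ : v₂ ∉ X) (hf : ends f = s(u₁, u₂)) (hf' : ends f' = s(v₁, v₂)) :
    IsRGraph r (markedEnds ends X ⟨u₁, hu₁⟩ ⟨v₁, hv₁⟩) := by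
  obtain ⟨hloop, hconn, hdeg, hcut⟩ := hG
  have hC2 : (Cut ends X).ncard = 2 := by rw [hC, Set.ncard_pair hff]
  have hX : Even X.ncard := even_ncard_of_ncard_cut_lt hcut (by omega)
  have huv : u₁ ≠ v₁ := by
    rintro rfl
    have hends : Cut ends X ⊆ {e | u₁ ∈ ends e} := by
      rw [hC]
      rintro e (rfl | rfl)
      exacts [show u₁ ∈ ends e from hf ▸ Sym2.mem_mk_left _ _,
        show u₁ ∈ ends e from hf' ▸ Sym2.mem_mk_left _ _]
    have := ncard_cut_eq_zero_of_subset_ends hdeg hcut hX hu₁ hends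
    omega
  have hexit : ∀ e ∈ Cut ends X, ∀ x : X, (x : V) ∈ ends e → x = ⟨u₁, hu₁⟩ ∨ x = ⟨v₁, hv₁⟩ :=
    fun e he x hxe => (eq_and_eq_of_mem_cut_eq_pair hC hu₂ hv₂ hf hf' he x.2 hxe).imp
      (fun h => Subtype.ext h.2) (fun h => Subtype.ext h.2)
  exact ⟨markedEnds_not_isDiag hloop fun h => huv (congrArg Subtype.val h),
    toSimple_markedEnds_connected hconn hexit,
    fun x => (deg_markedEnds hC hu₁ hu₂ hv₁ hv₂ hf hf' huv x).trans (hdeg x),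
    le_ncard_cut_markedEnds hcut hX hC hu₁ hu₂ hv₁ hv₂ hf hf'⟩

end TwoCut

/-- For an `r`-graph `G` (`r ≥ 3`) with a `2`-edge-cut `C = {f, f'} = ∂(X)`,
both marked `C`-components of `G` are also `r`-graphs for the same `r`. -/
theorem stmt11 {V E : Type} [Fintype V] [Fintype E]
    (ends : E → Sym2 V) (r : ℕ) (hr : 3 ≤ r) (hG : IsRGraph r ends)
    (X : Set V) (f f' : E) (hff : f ≠ f') (hC : Cut ends X = {f, f'})
    (u₁ u₂ v₁ v₂ : V) (hu₁ : u₁ ∈ X) (hu₂ : u₂ ∉ X) (hv₁ : v₁ ∈ X) (hv₂ : v₂ ∉ X)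
    (hf : ends f = s(u₁, u₂)) (hf' : ends f' = s(v₁, v₂)) :
    IsRGraph r (markedEnds ends X ⟨u₁, hu₁⟩ ⟨v₁, hv₁⟩) ∧
      IsRGraph r (markedEnds ends Xᶜ ⟨u₂, hu₂⟩ ⟨v₂, hv₂⟩) :=
  ⟨isRGraph_markedEnds hr hG hff hC hu₁ hu₂ hv₁ hv₂ hf hf',
    isRGraph_markedEnds hr hG hff ((cut_compl ends X).trans hC) hu₂ (not_not.mpr hu₁) hv₂
      (not_not.mpr hv₁) (hf.trans Sym2.eq_swap) (hf'.trans Sym2.eq_swap)⟩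
end
end
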